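/- arXiv:2512.08684 — 4 statements merged into one kernel-verified Lean document; each statement's English description precedes it below -/
import Mathlib

section
/- For every integer n ≥ 0 and every real x > 0, the ratio of modified spherical Bessel functions of the first kind satisfies i_{n+1}(x)/i_n(x) < x/((n+1) + √((n+1)² + x²)). -/
open Real Finset

/-- Modified spherical Bessel function of the second kind `k_n`, explicit closed form. -/
noncomputable def kBes (n : ℕ) (x : ℝ) : ℝ :=
  (Real.exp (-x) / x) *
    ∑ l ∈ Finset.range (n + 1),
      (Nat.factorial (n + l) : ℝ) /
        ((Nat.factorial l : ℝ) * (Nat.factorial (n - l) : ℝ) * (2 * x) ^ l)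

/-- Modified spherical Bessel function of the first kind `i_n`, explicit closed form. -/
noncomputable def iBes (n : ℕ) (x : ℝ) : ℝ :=
  (1 / (2 * x)) *
    (Real.exp x *
        ∑ l ∈ Finset.range (n + 1),
          (-1 : ℝ) ^ l * (Nat.factorial (n + l) : ℝ) /
            ((Nat.factorial l : ℝ) * (Nat.factorial (n - l) : ℝ) * (2 * x) ^ l)
      + (-1 : ℝ) ^ (n + 1) * Real.exp (-x) *
        ∑ l ∈ Finset.range (n + 1),
          (Nat.factorial (n + l) : ℝ) /
            ((Nat.factorial l : ℝ) * (Nat.factorial (n - l) : ℝ) * (2 * x) ^ l))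

/-!
The key is the Poisson integral `i_n(x) = x^n / (2^(n+1) n!) ∫_{-1}^{1} e^{xt} (1 - t²)^n dt`,
which holds because both sides satisfy `i_{n+2} = i_n - (2n+3)/x · i_{n+1}` (for the closed form
this is the recurrence of the Bessel polynomials) and agree for `n = 0, 1`.
Write `M_k = ∫_{-1}^{1} t^k e^{xt} (1 - t²)^n dt`. Integrating by parts gives
`i_{n+1}/i_n = M_1/M_0` and `x M_2 = x M_0 - 2(n+1) M_1`. The strict Cauchy–Schwarz inequality
`M_1² < M_0 M_2` then says that `r = M_1/M_0` satisfies `x r² + 2(n+1) r < x`, so `r` lies below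
the positive root `x/((n+1) + √((n+1)² + x²))` of that quadratic.
-/

open Nat

theorem two_mul_add_one_mul_choose_add_three (n l : ℕ) :
    (2 * l + 1) * (n + l + 3).choose (2 * l + 2)
      = (2 * l + 1) * (n + l + 1).choose (2 * l + 2)
        + (2 * n + 3) * (n + l + 1).choose (2 * l) := by
  have pascal : (n + l + 3).choose (2 * l + 2) = (n + l + 1).choose (2 * l)
      + 2 * (n + l + 1).choose (2 * l + 1) + (n + l + 1).choose (2 * l + 2) := by
    rw [Nat.choose_succ_succ' (n + l + 2), Nat.choose_succ_succ' (n + l + 1) (2 * l),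
      Nat.choose_succ_succ' (n + l + 1) (2 * l + 1)]
    ring
  have hsucc := Nat.choose_succ_right_eq (n + l + 1) (2 * l)
  rcases le_or_gt (2 * l) (n + l + 1) with h | h
  · rw [pascal]
    zify [h] at hsucc ⊢
    linear_combination 2 * hsucc
  · simp [Nat.choose_eq_zero_of_lt, h, show n + l + 1 < 2 * l + 2 by omega,
      show n + l + 3 < 2 * l + 2 by omega]

/-- The coefficient `(n + l)! / (l! (n - l)!)` of the Bessel polynomial, written with
`(n + l).choose (2 * l)` so that it vanishes for `l > n`. -/
noncomputable def besselCoeff (n l : ℕ) : ℝ := (n + l).choose (2 * l) * (2 * l)! / l !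

/-- `besselPoly n z = y_n(2z)` for the Bessel polynomial `y_n`. -/
noncomputable def besselPoly (n : ℕ) (z : ℝ) : ℝ := ∑ l ∈ range (n + 1), besselCoeff n l * z ^ l

theorem besselCoeff_eq_of_le {n l : ℕ} (h : l ≤ n) :
    besselCoeff n l = (n + l)! / (l ! * (n - l)!) := by
  rw [besselCoeff, ← Nat.choose_mul_factorial_mul_factorial (show 2 * l ≤ n + l by omega),
    show n + l - 2 * l = n - l by omega]
  push_cast
  field_simp

theorem besselCoeff_eq_zero_of_lt {n l : ℕ} (h : n < l) : besselCoeff n l = 0 := by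
  simp [besselCoeff, Nat.choose_eq_zero_of_lt (show n + l < 2 * l by omega)]

theorem besselCoeff_zero_right (n : ℕ) : besselCoeff n 0 = 1 := by simp [besselCoeff]

theorem besselCoeff_add_two_succ (n l : ℕ) :
    besselCoeff (n + 2) (l + 1)
      = besselCoeff n (l + 1) + 2 * (2 * n + 3) * besselCoeff (n + 1) l := by
  have key : ((2 * l + 1) * (n + l + 3).choose (2 * l + 2) : ℝ)
      = (2 * l + 1) * (n + l + 1).choose (2 * l + 2)
        + (2 * n + 3) * (n + l + 1).choose (2 * l) := by
    exact_mod_cast two_mul_add_one_mul_choose_add_three n l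
  simp only [besselCoeff, show 2 * (l + 1) = 2 * l + 1 + 1 by ring, Nat.factorial_succ,
    show n + 2 + (l + 1) = n + l + 3 by ring, show n + (l + 1) = n + l + 1 by ring,
    show n + 1 + l = n + l + 1 by ring]
  push_cast
  field_simp
  linear_combination (2 * (l : ℝ) + 2) * key

theorem besselPoly_eq_sum_range {n N : ℕ} (h : n < N) (z : ℝ) :
    besselPoly n z = ∑ l ∈ range N, besselCoeff n l * z ^ l := by
  refine Finset.sum_subset (by simpa using h) fun l _ hl => ?_
  rw [besselCoeff_eq_zero_of_lt (by simpa using hl), zero_mul]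

theorem besselPoly_add_two (n : ℕ) (z : ℝ) :
    besselPoly (n + 2) z = besselPoly n z + 2 * (2 * n + 3) * z * besselPoly (n + 1) z := by
  rw [besselPoly, besselPoly_eq_sum_range (n := n) (show n < n + 3 by omega),
    besselPoly_eq_sum_range (n := n + 1) (show n + 1 < n + 2 by omega),
    sum_range_succ' (fun l => besselCoeff (n + 2) l * z ^ l) (n + 2),
    sum_range_succ' (fun l => besselCoeff n l * z ^ l) (n + 2), mul_sum]
  simp only [besselCoeff_add_two_succ, besselCoeff_zero_right, add_mul, sum_add_distrib]
  have hshift : ∑ l ∈ range (n + 2), 2 * (2 * (n : ℝ) + 3) * besselCoeff (n + 1) l * z ^ (l + 1)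
      = ∑ l ∈ range (n + 2), 2 * (2 * (n : ℝ) + 3) * z * (besselCoeff (n + 1) l * z ^ l) :=
    sum_congr rfl fun l _ => by ring
  rw [hshift]
  ring

theorem iBes_eq_besselPoly (n : ℕ) (x : ℝ) :
    iBes n x = (exp x * besselPoly n (-(2 * x)⁻¹)
      + (-1) ^ (n + 1) * exp (-x) * besselPoly n (2 * x)⁻¹) / (2 * x) := by
  have hneg : ∑ l ∈ range (n + 1), (-1 : ℝ) ^ l * (n + l)! / (l ! * (n - l)! * (2 * x) ^ l)
      = besselPoly n (-(2 * x)⁻¹) := sum_congr rfl fun l hl => by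
    rw [besselCoeff_eq_of_le (Nat.lt_succ_iff.mp (mem_range.mp hl)), neg_pow (2 * x)⁻¹, inv_pow]
    ring
  have hpos : ∑ l ∈ range (n + 1), ((n + l)! : ℝ) / (l ! * (n - l)! * (2 * x) ^ l)
      = besselPoly n (2 * x)⁻¹ := sum_congr rfl fun l hl => by
    rw [besselCoeff_eq_of_le (Nat.lt_succ_iff.mp (mem_range.mp hl)), inv_pow]
    ring
  rw [iBes, hneg, hpos]
  ring

theorem iBes_add_two (n : ℕ) {x : ℝ} (hx : x ≠ 0) :
    iBes (n + 2) x = iBes n x - (2 * n + 3) / x * iBes (n + 1) x := by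
  simp only [iBes_eq_besselPoly, besselPoly_add_two]
  field_simp
  ring

theorem sq_integral_id_mul_lt {ρ : ℝ → ℝ} {a b : ℝ} (hab : a < b) (hρ : Continuous ρ)
    (hnonneg : ∀ t ∈ Set.Icc a b, 0 ≤ ρ t) (hpos : ∀ t ∈ Set.Ioo a b, 0 < ρ t) :
    (∫ t in a..b, t * ρ t) ^ 2 < (∫ t in a..b, ρ t) * ∫ t in a..b, t ^ 2 * ρ t := by
  set U := ∫ t in a..b, ρ t
  set V := ∫ t in a..b, t * ρ t
  set W := ∫ t in a..b, t ^ 2 * ρ t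
  have hU : 0 < U :=
    intervalIntegral.intervalIntegral_pos_of_pos_on (hρ.intervalIntegrable a b) hpos hab
  set c := V / U
  have hvar : 0 < ∫ t in a..b, (t - c) ^ 2 * ρ t := by
    obtain ⟨p, hp, hpc⟩ := (Set.Ioo_infinite hab).nontrivial.exists_ne c
    exact intervalIntegral.integral_pos hab (by fun_prop)
      (fun t ht => mul_nonneg (sq_nonneg _) (hnonneg t (Set.Ioc_subset_Icc_self ht)))
      ⟨p, Set.Ioo_subset_Icc_self hp,
        mul_pos (pow_two_pos_of_ne_zero (sub_ne_zero.mpr hpc)) (hpos p hp)⟩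
  have hexpand : ∫ t in a..b, (t - c) ^ 2 * ρ t = W - 2 * c * V + c ^ 2 * U := by
    have iW : IntervalIntegrable (fun t => t ^ 2 * ρ t) MeasureTheory.volume a b :=
      (by fun_prop : Continuous fun t => t ^ 2 * ρ t).intervalIntegrable a b
    have iV : IntervalIntegrable (fun t => 2 * c * (t * ρ t)) MeasureTheory.volume a b :=
      (by fun_prop : Continuous fun t => 2 * c * (t * ρ t)).intervalIntegrable a b
    have iU : IntervalIntegrable (fun t => c ^ 2 * ρ t) MeasureTheory.volume a b :=
      (by fun_prop : Continuous fun t => c ^ 2 * ρ t).intervalIntegrable a b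
    rw [← intervalIntegral.integral_const_mul, ← intervalIntegral.integral_const_mul,
      ← intervalIntegral.integral_sub iW iV, ← intervalIntegral.integral_add (iW.sub iV) iU]
    exact intervalIntegral.integral_congr fun t _ => by ring
  have hcU : c * U = V := div_mul_cancel₀ V hU.ne'
  have hgap : U * W - V ^ 2 = U * ∫ t in a..b, (t - c) ^ 2 * ρ t := by
    rw [hexpand, ← hcU]
    ring
  linarith [mul_pos hU hvar]

noncomputable def poissonWeight (n : ℕ) (x t : ℝ) : ℝ := exp (x * t) * (1 - t ^ 2) ^ n

noncomputable def poissonMoment (n k : ℕ) (x : ℝ) : ℝ :=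
  ∫ t in (-1 : ℝ)..1, t ^ k * poissonWeight n x t

theorem continuous_poissonWeight (n : ℕ) (x : ℝ) : Continuous (poissonWeight n x) := by
  unfold poissonWeight; fun_prop

theorem intervalIntegrable_pow_mul_poissonWeight (n k : ℕ) (x a b : ℝ) :
    IntervalIntegrable (fun t => t ^ k * poissonWeight n x t) MeasureTheory.volume a b :=
  ((continuous_pow k).mul (continuous_poissonWeight n x)).intervalIntegrable a b

theorem poissonWeight_nonneg (n : ℕ) (x : ℝ) {t : ℝ} (ht : t ∈ Set.Icc (-1) 1) :
    0 ≤ poissonWeight n x t := by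
  have : 0 ≤ 1 - t ^ 2 := by nlinarith [ht.1, ht.2]
  unfold poissonWeight; positivity

theorem poissonWeight_pos (n : ℕ) (x : ℝ) {t : ℝ} (ht : t ∈ Set.Ioo (-1) 1) :
    0 < poissonWeight n x t := by
  have : 0 < 1 - t ^ 2 := by nlinarith [ht.1, ht.2]
  unfold poissonWeight; positivity

theorem poissonWeight_succ_one (n : ℕ) (x : ℝ) : poissonWeight (n + 1) x 1 = 0 := by
  simp [poissonWeight]

theorem poissonWeight_succ_neg_one (n : ℕ) (x : ℝ) : poissonWeight (n + 1) x (-1) = 0 := by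
  simp [poissonWeight]

theorem hasDerivAt_poissonWeight_succ (n : ℕ) (x t : ℝ) :
    HasDerivAt (poissonWeight (n + 1) x)
      (x * poissonWeight (n + 1) x t - 2 * (n + 1) * (t * poissonWeight n x t)) t := by
  have hexp : HasDerivAt (fun t => exp (x * t)) (exp (x * t) * x) t :=
    ((hasDerivAt_id t).const_mul x).exp.congr_deriv (by simp)
  have hpow : HasDerivAt (fun t => (1 - t ^ 2) ^ (n + 1))
      ((n + 1 : ℕ) * (1 - t ^ 2) ^ n * -(2 * t)) t := by
    simpa using ((hasDerivAt_pow 2 t).const_sub 1).fun_pow (n + 1)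
  refine (hexp.mul hpow).congr_deriv ?_
  simp only [poissonWeight]
  push_cast
  ring

theorem poissonMoment_succ_left (n k : ℕ) (x : ℝ) :
    poissonMoment (n + 1) k x = poissonMoment n k x - poissonMoment n (k + 2) x := by
  rw [poissonMoment, poissonMoment, poissonMoment, ← intervalIntegral.integral_sub
    (intervalIntegrable_pow_mul_poissonWeight n k x _ _)
    (intervalIntegrable_pow_mul_poissonWeight n (k + 2) x _ _)]
  refine intervalIntegral.integral_congr fun t _ => ?_
  simp only [poissonWeight]
  ring

-- For `k = 0` the truncated `k - 1` is harmless, its coefficient being `0`.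
theorem poissonMoment_parts (n k : ℕ) (x : ℝ) :
    x * poissonMoment (n + 1) k x + k * poissonMoment (n + 1) (k - 1) x
      = 2 * (n + 1) * poissonMoment n (k + 1) x := by
  have hderiv (t : ℝ) : HasDerivAt (fun t => t ^ k * poissonWeight (n + 1) x t)
      (k * (t ^ (k - 1) * poissonWeight (n + 1) x t) + x * (t ^ k * poissonWeight (n + 1) x t)
        - 2 * (n + 1) * (t ^ (k + 1) * poissonWeight n x t)) t :=
    ((hasDerivAt_pow k t).mul (hasDerivAt_poissonWeight_succ n x t)).congr_deriv (by ring)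
  have I (m j : ℕ) := intervalIntegrable_pow_mul_poissonWeight m j x (-1) 1
  have hint := intervalIntegral.integral_eq_sub_of_hasDerivAt (fun t _ => hderiv t)
    ((((I _ _).const_mul _).add ((I _ _).const_mul _)).sub ((I _ _).const_mul _))
  rw [intervalIntegral.integral_sub (((I _ _).const_mul _).add ((I _ _).const_mul _))
      ((I _ _).const_mul _),
    intervalIntegral.integral_add ((I _ _).const_mul _) ((I _ _).const_mul _),
    intervalIntegral.integral_const_mul, intervalIntegral.integral_const_mul,
    intervalIntegral.integral_const_mul, poissonWeight_succ_one, poissonWeight_succ_neg_one] at hint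
  simp only [poissonMoment]
  linear_combination hint

theorem mul_poissonMoment_succ_zero (n : ℕ) (x : ℝ) :
    x * poissonMoment (n + 1) 0 x = 2 * (n + 1) * poissonMoment n 1 x := by
  simpa using poissonMoment_parts n 0 x

theorem poissonMoment_zero_pos (n : ℕ) (x : ℝ) : 0 < poissonMoment n 0 x :=
  intervalIntegral.intervalIntegral_pos_of_pos_on
    (intervalIntegrable_pow_mul_poissonWeight n 0 x _ _)
    (fun t ht => by simpa using poissonWeight_pos n x ht) (by norm_num)

theorem sq_poissonMoment_one_lt (n : ℕ) (x : ℝ) :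
    poissonMoment n 1 x ^ 2 < poissonMoment n 0 x * poissonMoment n 2 x := by
  simpa [poissonMoment] using sq_integral_id_mul_lt (by norm_num) (continuous_poissonWeight n x)
    (fun t ht => poissonWeight_nonneg n x ht) (fun t ht => poissonWeight_pos n x ht)

theorem poissonMoment_zero_add_two (n : ℕ) (x : ℝ) :
    x ^ 2 * poissonMoment (n + 2) 0 x = 4 * (n + 1) * (n + 2) * poissonMoment n 0 x
      - 2 * (n + 2) * (2 * n + 3) * poissonMoment (n + 1) 0 x := by
  have h₁ := poissonMoment_parts (n + 1) 0 x
  have h₂ := poissonMoment_parts n 1 x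
  have h₃ := poissonMoment_succ_left n 0 x
  push_cast at h₁ h₂
  linear_combination x * h₁ + 2 * (n + 2) * h₂ + 4 * (n + 1) * (n + 2) * h₃

theorem poissonMoment_zero_zero {x : ℝ} (hx : x ≠ 0) :
    poissonMoment 0 0 x = (exp x - exp (-x)) / x := by
  have h := intervalIntegral.integral_comp_mul_left (a := -1) (b := 1) exp hx
  simp only [integral_exp, mul_neg, mul_one] at h
  simp only [poissonMoment, poissonWeight, pow_zero, mul_one, one_mul, h, smul_eq_mul]
  field_simp

theorem poissonMoment_zero_one {x : ℝ} (hx : x ≠ 0) :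
    poissonMoment 0 1 x = exp x * (1 / x - 1 / x ^ 2) + exp (-x) * (1 / x + 1 / x ^ 2) := by
  have hderiv (t : ℝ) : HasDerivAt (fun t => exp (x * t) * (t / x - 1 / x ^ 2))
      (t ^ 1 * poissonWeight 0 x t) t := by
    have hexp : HasDerivAt (fun t => exp (x * t)) (exp (x * t) * x) t :=
      ((hasDerivAt_id t).const_mul x).exp.congr_deriv (by simp)
    refine (hexp.mul (((hasDerivAt_id t).div_const x).sub_const _)).congr_deriv ?_
    simp only [poissonWeight, id]
    field_simp
    ring
  rw [poissonMoment, intervalIntegral.integral_eq_sub_of_hasDerivAt (fun t _ => hderiv t)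
    (intervalIntegrable_pow_mul_poissonWeight 0 1 x _ _)]
  simp only [mul_one, mul_neg]
  ring

theorem iBes_eq_poissonMoment (n : ℕ) {x : ℝ} (hx : x ≠ 0) :
    iBes n x = x ^ n / (2 ^ (n + 1) * n !) * poissonMoment n 0 x := by
  induction n using Nat.twoStepInduction with
  | zero =>
    rw [poissonMoment_zero_zero hx]
    simp only [iBes, zero_add, sum_range_one, Nat.sub_self, factorial_zero, cast_one, pow_zero]
    field_simp
    ring
  | one =>
    have h := mul_poissonMoment_succ_zero 0 x
    rw [eq_div_of_mul_eq hx ((mul_comm _ _).trans h), poissonMoment_zero_one hx]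
    simp only [iBes, sum_range_succ, Nat.reduceAdd, Nat.reduceSub, factorial, cast_one,
      pow_zero, pow_one]
    field_simp
    ring
  | more n ih₀ ih₁ =>
    rw [iBes_add_two n hx, ih₀, ih₁,
      eq_div_of_mul_eq (pow_ne_zero 2 hx) ((mul_comm _ _).trans (poissonMoment_zero_add_two n x))]
    simp only [Nat.factorial_succ]
    push_cast
    field_simp
    ring

theorem iBes_succ_div_iBes (n : ℕ) {x : ℝ} (hx : x ≠ 0) :
    iBes (n + 1) x / iBes n x = poissonMoment n 1 x / poissonMoment n 0 x := by
  rw [iBes_eq_poissonMoment (n + 1) hx, iBes_eq_poissonMoment n hx,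
    eq_div_of_mul_eq hx ((mul_comm _ _).trans (mul_poissonMoment_succ_zero n x)),
    Nat.factorial_succ]
  have hM := (poissonMoment_zero_pos n x).ne'
  push_cast
  field_simp
  ring

theorem div_lt_div_add_sqrt_of_quadratic_lt {u v x ν : ℝ} (hu : 0 < u) (hx : 0 < x) (hν : 0 ≤ ν)
    (h : x * v ^ 2 + 2 * ν * u * v < x * u ^ 2) :
    v / u < x / (ν + √(ν ^ 2 + x ^ 2)) := by
  set s := √(ν ^ 2 + x ^ 2)
  have hs : s ^ 2 = ν ^ 2 + x ^ 2 := Real.sq_sqrt (by positivity)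
  have hνs : 0 < ν + s := by positivity
  -- `x / (ν + s)` is the positive root of `x r² + 2 ν r = x`, as `(s - ν) (s + ν) = x²`;
  -- the quadratic is increasing for `r ≥ 0`, so `v / u` cannot reach that root.
  rw [div_lt_div_iff₀ hu hνs]
  by_contra! hge
  have h₁ : (x * u) ^ 2 ≤ (v * (ν + s)) ^ 2 := pow_le_pow_left₀ (by positivity) hge 2
  have h₂ : 2 * ν * u * (ν + s) * (x * u) ≤ 2 * ν * u * (ν + s) * (v * (ν + s)) :=
    mul_le_mul_of_nonneg_left hge (by positivity)
  have h₃ := mul_lt_mul_of_pos_right h (pow_pos hνs 2)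
  nlinarith [mul_le_mul_of_nonneg_left h₁ hx.le]

/-- For every integer `n ≥ 0` and every real `x > 0`,
`i_{n+1}(x)/i_n(x) < x/((n+1) + √((n+1)² + x²))`. -/
theorem iBes_ratio_lt (n : ℕ) (x : ℝ) (hx : 0 < x) :
    iBes (n + 1) x / iBes n x
      < x / (((n : ℝ) + 1) + Real.sqrt (((n : ℝ) + 1) ^ 2 + x ^ 2)) := by
  rw [iBes_succ_div_iBes n hx.ne']
  refine div_lt_div_add_sqrt_of_quadratic_lt (poissonMoment_zero_pos n x) hx (by positivity) ?_
  have hparts := mul_poissonMoment_succ_zero n x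
  have hsplit : poissonMoment (n + 1) 0 x = poissonMoment n 0 x - poissonMoment n 2 x :=
    poissonMoment_succ_left n 0 x
  have hcs := mul_lt_mul_of_pos_left (sq_poissonMoment_one_lt n x) hx
  linear_combination hcs + poissonMoment n 0 x * (x * hsplit - hparts)
end

section
/- For every integer n ≥ 1 and every real x > 0, the ratio of modified spherical Bessel functions of the second kind satisfies k_{n−1}(x)/k_n(x) > x/(n + √(n² + x²)). -/
open Real Finset

noncomputable def S (n : ℕ) (x : ℝ) : ℝ :=
  ∑ l ∈ Finset.range (n + 1),
      (Nat.factorial (n + l) : ℝ) /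
        ((Nat.factorial l : ℝ) * (Nat.factorial (n - l) : ℝ) * (2 * x) ^ l)

lemma S_pos (n : ℕ) (x : ℝ) (hx : 0 < x) : 0 < S n x := by
  apply Finset.sum_pos
  · intro l hl
    have h1 : (0:ℝ) < Nat.factorial (n+l) := by positivity
    have h2 : (0:ℝ) < (Nat.factorial l : ℝ) * (Nat.factorial (n - l) : ℝ) * (2 * x) ^ l := by
      positivity
    positivity
  · exact ⟨0, Finset.mem_range.mpr (Nat.succ_pos n)⟩

lemma termwise (n l : ℕ) (hl1 : 1 ≤ l) (hl2 : l ≤ n) (x : ℝ) (hx : x ≠ 0) :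
    (Nat.factorial (n + 2 + l) : ℝ) /
        ((Nat.factorial l : ℝ) * (Nat.factorial (n + 2 - l) : ℝ) * (2 * x) ^ l)
      = (Nat.factorial (n + l) : ℝ) /
          ((Nat.factorial l : ℝ) * (Nat.factorial (n - l) : ℝ) * (2 * x) ^ l)
        + (2 * n + 3) / x *
          ((Nat.factorial (n + 1 + (l - 1)) : ℝ) /
            ((Nat.factorial (l-1) : ℝ) * (Nat.factorial (n + 1 - (l-1)) : ℝ) * (2 * x) ^ (l-1))) := by
  obtain ⟨i, rfl⟩ : ∃ i, l = i + 1 := ⟨l - 1, by omega⟩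
  obtain ⟨m, rfl⟩ : ∃ m, n = i + 1 + m := ⟨n - (i+1), by omega⟩
  rw [show i + 1 + m + 2 + (i + 1) = 2*i + m + 4 from by ring,
      show i + 1 + m + 2 - (i + 1) = m + 2 from by omega,
      show i + 1 + m + (i + 1) = 2*i + m + 2 from by ring,
      show i + 1 + m - (i + 1) = m from by omega,
      show i + 1 - 1 = i from rfl,
      show i + 1 + m + 1 + i = 2*i + m + 2 from by ring,
      show i + 1 + m + 1 - i = m + 2 from by omega]
  have f1 : Nat.factorial (2*i+m+4) = (2*i+m+4) * ((2*i+m+3) * Nat.factorial (2*i+m+2)) := by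
    rw [show 2*i+m+4 = (2*i+m+2)+1+1 from by ring]
    rw [Nat.factorial_succ, Nat.factorial_succ]
  have f2 : Nat.factorial (m+2) = (m+2) * ((m+1) * Nat.factorial m) := by
    rw [Nat.factorial_succ, Nat.factorial_succ]
  have f3 : Nat.factorial (i+1) = (i+1) * Nat.factorial i := Nat.factorial_succ i
  rw [f1, f2, f3]
  have hif : (Nat.factorial i : ℝ) ≠ 0 := by positivity
  have hmf : (Nat.factorial m : ℝ) ≠ 0 := by positivity
  have hp : ((2:ℝ) * x) ^ i ≠ 0 := pow_ne_zero _ (by simp [hx])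
  push_cast
  rw [pow_succ]
  field_simp
  ring

lemma boundary1 (n : ℕ) (x : ℝ) (hx : x ≠ 0) :
    (Nat.factorial (n + 2 + (n+1)) : ℝ) /
        ((Nat.factorial (n+1) : ℝ) * (Nat.factorial (n + 2 - (n+1)) : ℝ) * (2 * x) ^ (n+1))
      = (2 * n + 3) / x *
          ((Nat.factorial (n + 1 + n) : ℝ) /
            ((Nat.factorial n : ℝ) * (Nat.factorial (n + 1 - n) : ℝ) * (2 * x) ^ n)) := by
  rw [show n + 2 + (n+1) = 2*n + 3 from by ring,
      show n + 2 - (n+1) = 1 from by omega,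
      show n + 1 + n = 2*n + 1 from by ring,
      show n + 1 - n = 1 from by omega]
  have f1 : Nat.factorial (2*n+3) = (2*n+3) * ((2*n+2) * Nat.factorial (2*n+1)) := by
    rw [show 2*n+3 = (2*n+1)+1+1 from by ring]
    rw [Nat.factorial_succ, Nat.factorial_succ]
  have f3 : Nat.factorial (n+1) = (n+1) * Nat.factorial n := Nat.factorial_succ n
  rw [f1, f3]
  have hnf : (Nat.factorial n : ℝ) ≠ 0 := by positivity
  have hp : ((2:ℝ) * x) ^ n ≠ 0 := pow_ne_zero _ (by simp [hx])
  push_cast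
  rw [pow_succ]
  field_simp

lemma boundary2 (n : ℕ) (x : ℝ) (hx : x ≠ 0) :
    (Nat.factorial (n + 2 + (n+2)) : ℝ) /
        ((Nat.factorial (n+2) : ℝ) * (Nat.factorial (n + 2 - (n+2)) : ℝ) * (2 * x) ^ (n+2))
      = (2 * n + 3) / x *
          ((Nat.factorial (n + 1 + (n+1)) : ℝ) /
            ((Nat.factorial (n+1) : ℝ) * (Nat.factorial (n + 1 - (n+1)) : ℝ) * (2 * x) ^ (n+1))) := by
  rw [show n + 2 + (n+2) = 2*n + 4 from by ring,
      show n + 2 - (n+2) = 0 from by omega,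
      show n + 1 + (n+1) = 2*n + 2 from by ring,
      show n + 1 - (n+1) = 0 from by omega]
  have f1 : Nat.factorial (2*n+4) = (2*n+4) * ((2*n+3) * Nat.factorial (2*n+2)) := by
    rw [show 2*n+4 = (2*n+2)+1+1 from by ring]
    rw [Nat.factorial_succ, Nat.factorial_succ]
  have f3 : Nat.factorial (n+2) = (n+2) * Nat.factorial (n+1) := Nat.factorial_succ (n+1)
  rw [f1, f3]
  have hnf : (Nat.factorial (n+1) : ℝ) ≠ 0 := by positivity
  have hp : ((2:ℝ) * x) ^ (n+1) ≠ 0 := pow_ne_zero _ (by simp [hx])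
  push_cast
  rw [pow_succ]
  field_simp
  ring

lemma S_rec (n : ℕ) (x : ℝ) (hx : x ≠ 0) :
    S (n+2) x = S n x + (2*n+3)/x * S (n+1) x := by
  have hL : ∀ f : ℕ → ℝ, ∑ l ∈ Finset.range (n+2+1), f l
      = f 0 + (∑ i ∈ Finset.range n, f (i+1)) + f (n+1) + f (n+2) := by
    intro f
    rw [Finset.sum_range_succ' f (n+2), Finset.sum_range_succ, Finset.sum_range_succ,
        show n+1+1 = n+2 from rfl]
    ring
  have hB : ∀ f : ℕ → ℝ, ∑ l ∈ Finset.range (n+1), f l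
      = f 0 + ∑ i ∈ Finset.range n, f (i+1) := by
    intro f
    rw [Finset.sum_range_succ' f n]
    ring
  have hC : ∀ f : ℕ → ℝ, ∑ l ∈ Finset.range (n+1+1), f l
      = (∑ i ∈ Finset.range n, f i) + f n + f (n+1) := by
    intro f
    rw [Finset.sum_range_succ, Finset.sum_range_succ]
  unfold S
  rw [Finset.mul_sum, hL, hB, hC]
  have hsum : ∑ i ∈ Finset.range n,
      (Nat.factorial (n + 2 + (i+1)) : ℝ) /
        ((Nat.factorial (i+1) : ℝ) * (Nat.factorial (n + 2 - (i+1)) : ℝ) * (2 * x) ^ (i+1))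
      = ∑ i ∈ Finset.range n,
        ((Nat.factorial (n + (i+1)) : ℝ) /
          ((Nat.factorial (i+1) : ℝ) * (Nat.factorial (n - (i+1)) : ℝ) * (2 * x) ^ (i+1))
        + (2 * n + 3) / x *
          ((Nat.factorial (n + 1 + i) : ℝ) /
            ((Nat.factorial i : ℝ) * (Nat.factorial (n + 1 - i) : ℝ) * (2 * x) ^ i))) := by
    refine Finset.sum_congr rfl fun i hi => ?_
    have hi' : i < n := Finset.mem_range.mp hi
    have := termwise n (i+1) (by omega) (by omega) x hx
    simpa using this
  rw [hsum, Finset.sum_add_distrib]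
  have h0 : (Nat.factorial (n + 2 + 0) : ℝ) /
      ((Nat.factorial 0 : ℝ) * (Nat.factorial (n + 2 - 0) : ℝ) * (2 * x) ^ 0)
      = (Nat.factorial (n + 0) : ℝ) /
      ((Nat.factorial 0 : ℝ) * (Nat.factorial (n - 0) : ℝ) * (2 * x) ^ 0) := by
    simp [Nat.factorial]
    rw [div_self (by positivity), div_self (by positivity)]
  have hb1 := boundary1 n x hx
  have hb2 := boundary2 n x hx
  rw [h0, hb1, hb2]
  ring

lemma S_mono (n : ℕ) (x : ℝ) (hx : 0 < x) : S n x ≤ S (n+1) x := by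
  unfold S
  rw [Finset.sum_range_succ (n := n+1)]
  have hextra : (0:ℝ) ≤ (Nat.factorial (n + 1 + (n+1)) : ℝ) /
      ((Nat.factorial (n+1) : ℝ) * (Nat.factorial (n + 1 - (n+1)) : ℝ) * (2 * x) ^ (n+1)) := by
    positivity
  have hle : ∑ l ∈ Finset.range (n+1),
      (Nat.factorial (n + l) : ℝ) /
        ((Nat.factorial l : ℝ) * (Nat.factorial (n - l) : ℝ) * (2 * x) ^ l)
      ≤ ∑ l ∈ Finset.range (n+1),
      (Nat.factorial (n + 1 + l) : ℝ) /
        ((Nat.factorial l : ℝ) * (Nat.factorial (n + 1 - l) : ℝ) * (2 * x) ^ l) := by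
    refine Finset.sum_le_sum fun l hl => ?_
    have hln : l ≤ n := by
      have := Finset.mem_range.mp hl; omega
    obtain ⟨m, rfl⟩ : ∃ m, n = l + m := ⟨n - l, by omega⟩
    rw [show l + m + l = 2*l + m from by ring,
        show l + m - l = m from by omega,
        show l + m + 1 + l = 2*l + m + 1 from by ring,
        show l + m + 1 - l = m + 1 from by omega]
    have f1 : Nat.factorial (2*l+m+1) = (2*l+m+1) * Nat.factorial (2*l+m) :=
      Nat.factorial_succ _
    have f2 : Nat.factorial (m+1) = (m+1) * Nat.factorial m := Nat.factorial_succ _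
    rw [f1, f2, div_le_div_iff₀ (by positivity) (by positivity)]
    push_cast
    have hK : (0:ℝ) < (Nat.factorial (2*l+m) : ℝ) *
        ((Nat.factorial l : ℝ) * (Nat.factorial m : ℝ) * (2*x)^l) := by positivity
    nlinarith [hK, mul_nonneg hK.le (by positivity : (0:ℝ) ≤ (l:ℝ))]
  linarith

lemma S_zero (x : ℝ) : S 0 x = 1 := by
  simp [S, Nat.factorial]

lemma S_one (x : ℝ) (hx : x ≠ 0) : S 1 x = 1 + 1/x := by
  unfold S
  rw [Finset.sum_range_succ, Finset.sum_range_succ, Finset.sum_range_zero]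
  norm_num [Nat.factorial]
  field_simp

lemma key (m : ℕ) (x : ℝ) (hx : 0 < x) :
    0 < x * S m x ^ 2 + (2*(m:ℝ)+2) * S m x * S (m+1) x - x * S (m+1) x ^ 2 ∧
    x * S m x ^ 2 + (2*(m:ℝ)+2) * S m x * S (m+1) x - x * S (m+1) x ^ 2
      < (2*(m:ℝ)+3)/x * S (m+1) x ^ 2 := by
  induction m with
  | zero =>
    have h0 : S 0 x = 1 := S_zero x
    have h1 : S 1 x = 1 + 1/x := S_one x hx.ne'
    rw [h0, h1]
    have hQ : x * (1:ℝ) ^ 2 + (2*(0:ℕ)+2) * 1 * (1 + 1/x) - x * (1 + 1/x) ^ 2 = 1/x := by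
      field_simp; ring
    push_cast at hQ ⊢
    rw [hQ]
    constructor
    · positivity
    · have hu : (0:ℝ) < 1/x := one_div_pos.mpr hx
      have hd : (2*(0:ℝ)+3)/x * (1+1/x)^2 = 3*(1/x) + 6*(1/x)^2 + 3*(1/x)^3 := by
        field_simp; ring
      rw [hd]
      nlinarith [hu, mul_pos hu hu, mul_pos (mul_pos hu hu) hu]
  | succ k ih =>
    have ha := S_pos k x hx
    have hb := S_pos (k+1) x hx
    have hc := S_pos (k+1+1) x hx
    have hbc : S (k+1) x ≤ S (k+1+1) x := S_mono (k+1) x hx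
    have hrec : S (k+1+1) x = S k x + (2*(k:ℝ)+3)/x * S (k+1) x := by
      have := S_rec k x hx.ne'
      push_cast at this ⊢
      convert this using 2
    have hid : x * S (k+1) x ^ 2 + (2*((k:ℝ)+1)+2) * S (k+1) x * S (k+1+1) x
          - x * S (k+1+1) x ^ 2
        = (2*(k:ℝ)+3)/x * S (k+1) x ^ 2
          - (x * S k x ^ 2 + (2*(k:ℝ)+2) * S k x * S (k+1) x - x * S (k+1) x ^ 2) := by
      rw [hrec]; field_simp; ring
    push_cast
    rw [hid]
    have h5 : (2*(k:ℝ)+3)/x * S (k+1) x ^ 2 ≤ (2*((k:ℝ)+1)+3)/x * S (k+1+1) x ^ 2 := by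
      gcongr <;> linarith
    exact ⟨by linarith [ih.2], by linarith [ih.1]⟩

lemma kBes_eq (n : ℕ) (x : ℝ) : kBes n x = Real.exp (-x) / x * S n x := rfl


/-- For every integer `n ≥ 1` and every real `x > 0`,
`k_{n−1}(x)/k_n(x) > x/(n + √(n² + x²))`. -/
theorem kBes_ratio_gt (n : ℕ) (hn : 1 ≤ n) (x : ℝ) (hx : 0 < x) :
    kBes (n - 1) x / kBes n x > x / ((n : ℝ) + Real.sqrt ((n : ℝ) ^ 2 + x ^ 2)) := by
  obtain ⟨m, rfl⟩ : ∃ m, n = m + 1 := ⟨n - 1, by omega⟩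
  have he : Real.exp (-x) / x ≠ 0 := by positivity
  have ha := S_pos m x hx
  have hb := S_pos (m+1) x hx
  rw [gt_iff_lt, show m + 1 - 1 = m from rfl, kBes_eq, kBes_eq, mul_div_mul_left _ _ he]
  have hQ : 0 < x * S m x ^ 2 + 2*((m:ℝ)+1) * S m x * S (m+1) x - x * S (m+1) x ^ 2 := by
    have h := (key m x hx).1
    nlinarith [h]
  have hcast : ((m+1:ℕ):ℝ) = (m:ℝ)+1 := by push_cast; ring
  rw [hcast]
  set N : ℝ := (m:ℝ) + 1 with hN
  set s : ℝ := Real.sqrt (N^2 + x^2) with hsdef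
  have hs2 : s^2 = N^2 + x^2 := Real.sq_sqrt (by positivity)
  have hs0 : 0 < s := Real.sqrt_pos.mpr (by positivity)
  have hN0 : 0 < N := by positivity
  rw [div_lt_div_iff₀ (by positivity) hb]
  nlinarith [hQ, hs2, hs0, hN0, ha, hb, hx, mul_pos ha hs0,
    sq_nonneg (x * S (m+1) x - N * S m x - S m x * s)]
end

section
/- For n = 0, every real x > 0, and all reals ε, ε_s with 0 < ε ≤ ε_s, the quadratic f_0 satisfies f_0(1) = 0 and f_0(λ) > 0 for every real λ with −1 ≤ λ < 1. -/
open Real Finset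

/-- The quadratic `f_n(λ)` from the spectral-radius proof. -/
noncomputable def fquad (n : ℕ) (x eps epss lam : ℝ) : ℝ :=
  let A : ℝ := (n : ℝ) * (eps - epss) * iBes n x - x * epss * iBes (n + 1) x
  let B : ℝ := (n : ℝ) * (eps - epss) * kBes n x + x * epss * kBes (n + 1) x
  let C : ℝ := (n : ℝ) * iBes n x + x * iBes (n + 1) x
  let D : ℝ := (n : ℝ) * kBes n x - x * kBes (n + 1) x
  let F : ℝ := 2 * (n : ℝ) / x + iBes (n + 1) x / iBes n x - kBes (n + 1) x / kBes n x
  A ^ 2 * D * kBes n x * lam ^ 2 - A * B * x * iBes n x * kBes n x * F * lam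
    + B ^ 2 * C * iBes n x

/-!
At `n = 0` the `ε`-terms drop out and, after clearing the denominators `i₀, k₀`,
`f₀(λ) = x³ ε_s² i₁ k₁ (1 - λ) (i₁ k₀ λ + k₁ i₀)`.
All of `i₀ = sinh x / x`, `i₁ = (x cosh x - sinh x) / x²`, `k₀`, `k₁` are positive
(`i₁ > 0` is `tanh x < x`), so the linear factor increases in `λ`; at `λ = -1` it equals
`k₁ i₀ - i₁ k₀ = e⁻ˣ (eˣ - (1 + x) e⁻ˣ) / x³ > 0`, because `e²ˣ > 1 + x`.
-/

theorem Real.sinh_lt_mul_cosh {x : ℝ} (hx : 0 < x) : sinh x < x * cosh x := by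
  have hderiv (t : ℝ) : HasDerivAt (fun t => t * cosh t - sinh t) (t * sinh t) t :=
    (((hasDerivAt_id' t).mul (hasDerivAt_cosh t)).sub (hasDerivAt_sinh t)).congr_deriv (by ring)
  have hmono : StrictMonoOn (fun t => t * cosh t - sinh t) (Set.Ici 0) := by
    refine strictMonoOn_of_deriv_pos (convex_Ici 0) (by fun_prop) fun t ht => ?_
    rw [interior_Ici] at ht
    rw [(hderiv t).deriv]
    exact mul_pos ht (sinh_pos_iff.mpr ht)
  simpa using hmono Set.self_mem_Ici (Set.mem_Ici.mpr hx.le) hx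

theorem kBes_pos (n : ℕ) {x : ℝ} (hx : 0 < x) : 0 < kBes n x := by
  unfold kBes
  have hterm : 0 < ∑ l ∈ Finset.range (n + 1), (Nat.factorial (n + l) : ℝ) /
      ((Nat.factorial l : ℝ) * (Nat.factorial (n - l) : ℝ) * (2 * x) ^ l) :=
    Finset.sum_pos (fun l _ => by positivity) Finset.nonempty_range_add_one
  positivity

theorem kBes_zero (x : ℝ) : kBes 0 x = exp (-x) / x := by
  simp [kBes]

theorem kBes_one {x : ℝ} (hx : x ≠ 0) : kBes 1 x = exp (-x) * (x + 1) / x ^ 2 := by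
  simp [kBes, Finset.sum_range_succ, field]

theorem iBes_zero (x : ℝ) : iBes 0 x = sinh x / x := by
  simp [iBes, sinh_eq, field, ← sub_eq_add_neg]

theorem iBes_one {x : ℝ} (hx : x ≠ 0) : iBes 1 x = (x * cosh x - sinh x) / x ^ 2 := by
  simp [iBes, Finset.sum_range_succ, sinh_eq, cosh_eq, field]
  ring

theorem iBes_zero_pos {x : ℝ} (hx : 0 < x) : 0 < iBes 0 x := by
  rw [iBes_zero]
  exact div_pos (sinh_pos_iff.mpr hx) hx

theorem iBes_one_pos {x : ℝ} (hx : 0 < x) : 0 < iBes 1 x := by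
  rw [iBes_one hx.ne']
  exact div_pos (sub_pos.mpr (sinh_lt_mul_cosh hx)) (by positivity)

theorem iBes_one_mul_kBes_zero_lt_kBes_one_mul_iBes_zero {x : ℝ} (hx : 0 < x) :
    iBes 1 x * kBes 0 x < kBes 1 x * iBes 0 x := by
  have hexp : x + 1 < exp x * exp x := by
    rw [← exp_add]
    exact add_one_lt_exp (by positivity) |>.trans_le' (by linarith)
  rw [iBes_one hx.ne', kBes_zero, kBes_one hx.ne', iBes_zero, sinh_eq, cosh_eq, exp_neg]
  have := exp_pos x
  field_simp
  nlinarith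

theorem fquad_zero_eq {x : ℝ} (hi : iBes 0 x ≠ 0) (hk : kBes 0 x ≠ 0) (eps epss lam : ℝ) :
    fquad 0 x eps epss lam = x ^ 3 * epss ^ 2 * iBes 1 x * kBes 1 x *
      ((1 - lam) * (iBes 1 x * kBes 0 x * lam + kBes 1 x * iBes 0 x)) := by
  simp only [fquad, Nat.cast_zero, zero_mul, zero_add, zero_sub]
  field_simp
  ring

/-- For `n = 0`, every real `x > 0`, and all reals `ε, ε_s` with `0 < ε ≤ ε_s`,
the quadratic `f_0` satisfies `f_0(1) = 0` and `f_0(λ) > 0` for every real `λ`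
with `−1 ≤ λ < 1`. -/
theorem fquad_zero (x : ℝ) (hx : 0 < x) (eps epss : ℝ)
    (heps : 0 < eps) (hle : eps ≤ epss) :
    fquad 0 x eps epss 1 = 0 ∧
      ∀ lam : ℝ, -1 ≤ lam → lam < 1 → 0 < fquad 0 x eps epss lam := by
  have hi0 := iBes_zero_pos hx
  have hi1 := iBes_one_pos hx
  have hk0 := kBes_pos 0 hx
  have hk1 := kBes_pos 1 hx
  simp only [fquad_zero_eq hi0.ne' hk0.ne']
  refine ⟨by ring, fun lam hlam hlam' => ?_⟩
  have hlin : 0 < iBes 1 x * kBes 0 x * lam + kBes 1 x * iBes 0 x := by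
    nlinarith [iBes_one_mul_kBes_zero_lt_kBes_one_mul_iBes_zero hx, mul_pos hi1 hk0]
  have hepss : epss ≠ 0 := by linarith
  exact mul_pos (by positivity) (mul_pos (sub_pos.mpr hlam') hlin)
end

section
/- For every integer n ≥ 0 and every real x > 0, the function k_n is differentiable at x with derivative k_n'(x) = (n/x)·k_n(x) − k_{n+1}(x). -/
open Real Finset

/-!
Expand `k_n(x) = ∑_{l ≤ n} c_{n,l} e^{-x} / x^{l+1}` with `c_{n,l} = (n+l)! / (l! (n-l)! 2^l)`.
Each term satisfies `(e^{-x}/x^{l+1})' = -e^{-x}/x^{l+1} - (l+1) e^{-x}/x^{l+2}`, and the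
coefficients obey the Pascal-type recurrence `c_{n+1,l+1} = c_{n,l+1} + (n+l+1) c_{n,l}`
(with `c_{n,n+1}` read as `0`), which is exactly what matching the coefficients of
`e^{-x}/x^{l+1}` in `k_n' = (n/x) k_n - k_{n+1}` requires.
-/

-- Meaningful only for `l ≤ n`: beyond that `(n - l)!` is a truncated-subtraction junk value.
noncomputable def kBesCoeff (n l : ℕ) : ℝ :=
  (Nat.factorial (n + l) : ℝ) / ((Nat.factorial l : ℝ) * (Nat.factorial (n - l) : ℝ) * 2 ^ l)

noncomputable def kBesTerm (l : ℕ) (x : ℝ) : ℝ :=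
  Real.exp (-x) / x ^ (l + 1)

theorem kBesCoeff_zero (n : ℕ) : kBesCoeff n 0 = 1 := by
  simp [kBesCoeff, Nat.factorial_ne_zero]

theorem kBesCoeff_succ_succ {n l : ℕ} (h : l + 1 ≤ n) :
    kBesCoeff (n + 1) (l + 1) = kBesCoeff n (l + 1) + (n + l + 1) * kBesCoeff n l := by
  obtain ⟨k, rfl⟩ := Nat.exists_eq_add_of_le h
  have h₁ : l + 1 + k + 1 + (l + 1) = l + l + k + 1 + 1 + 1 := by omega
  have h₂ : l + 1 + k + (l + 1) = l + l + k + 1 + 1 := by omega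
  have h₃ : l + 1 + k + l = l + l + k + 1 := by omega
  have h₄ : l + 1 + k + 1 - (l + 1) = k + 1 := by omega
  have h₅ : l + 1 + k - (l + 1) = k := by omega
  have h₆ : l + 1 + k - l = k + 1 := by omega
  simp only [kBesCoeff, h₁, h₂, h₃, h₄, h₅, h₆, Nat.factorial_succ]
  push_cast
  field_simp
  ring

theorem kBesCoeff_succ_self (n : ℕ) :
    kBesCoeff (n + 1) (n + 1) = (2 * n + 1) * kBesCoeff n n := by
  have h : n + 1 + (n + 1) = n + n + 1 + 1 := by omega
  simp only [kBesCoeff, Nat.sub_self, h, Nat.factorial_succ, Nat.factorial_zero]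
  push_cast
  field_simp
  ring

theorem sum_kBesCoeff_succ {M : Type*} [AddCommGroup M] [Module ℝ M] (n : ℕ) (f : ℕ → M) :
    ∑ l ∈ range (n + 2), kBesCoeff (n + 1) l • f l =
      ∑ l ∈ range (n + 1), kBesCoeff n l • f l +
        ∑ l ∈ range (n + 1), ((n + l + 1 : ℝ) * kBesCoeff n l) • f (l + 1) := by
  rw [sum_range_succ' (fun l => kBesCoeff (n + 1) l • f l),
    sum_range_succ (fun l => kBesCoeff (n + 1) (l + 1) • f (l + 1)),
    sum_range_succ' (fun l => kBesCoeff n l • f l),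
    sum_range_succ (fun l => ((n + l + 1 : ℝ) * kBesCoeff n l) • f (l + 1))]
  have hmid : ∑ l ∈ range n, kBesCoeff (n + 1) (l + 1) • f (l + 1) =
      ∑ l ∈ range n, (kBesCoeff n (l + 1) • f (l + 1) +
        ((n + l + 1 : ℝ) * kBesCoeff n l) • f (l + 1)) :=
    sum_congr rfl fun l hl => by rw [kBesCoeff_succ_succ (mem_range.1 hl), add_smul]
  rw [hmid, sum_add_distrib, kBesCoeff_succ_self, kBesCoeff_zero, kBesCoeff_zero]
  module

theorem kBes_eq_sum (n : ℕ) (x : ℝ) :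
    kBes n x = ∑ l ∈ range (n + 1), kBesCoeff n l * kBesTerm l x := by
  rcases eq_or_ne x 0 with rfl | hx
  · simp [kBes, kBesTerm]
  rw [kBes, mul_sum]
  refine sum_congr rfl fun l _ => ?_
  rw [kBesCoeff, kBesTerm, mul_pow]
  field_simp
  ring

theorem kBesTerm_succ (l : ℕ) (x : ℝ) : kBesTerm (l + 1) x = kBesTerm l x / x := by
  rw [kBesTerm, kBesTerm, div_div, ← pow_succ]

theorem hasDerivAt_kBesTerm (l : ℕ) {x : ℝ} (hx : x ≠ 0) :
    HasDerivAt (kBesTerm l) (-kBesTerm l x - (l + 1) * kBesTerm (l + 1) x) x := by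
  have hexp : HasDerivAt (fun x => Real.exp (-x)) (-Real.exp (-x)) x := by
    simpa using (hasDerivAt_neg x).exp
  have hpow : HasDerivAt (fun x : ℝ => x ^ (l + 1)) ((l + 1 : ℕ) * x ^ l) x := hasDerivAt_pow _ x
  refine (hexp.div hpow (pow_ne_zero _ hx)).congr_deriv ?_
  rw [kBesTerm, kBesTerm]
  field_simp
  push_cast
  ring

/-- For every integer `n ≥ 0` and every real `x > 0`, `k_n` is differentiable at `x`
with derivative `k_n'(x) = (n/x)·k_n(x) − k_{n+1}(x)`. -/
theorem kBes_hasDerivAt (n : ℕ) (x : ℝ) (hx : 0 < x) :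
    HasDerivAt (kBes n) ((n : ℝ) / x * kBes n x - kBes (n + 1) x) x := by
  have hsum : HasDerivAt (kBes n) (∑ l ∈ range (n + 1),
      kBesCoeff n l * (-kBesTerm l x - (l + 1) * kBesTerm (l + 1) x)) x := by
    rw [show kBes n = _ from funext (kBes_eq_sum n)]
    exact HasDerivAt.fun_sum fun l _ => (hasDerivAt_kBesTerm l hx.ne').const_mul _
  convert hsum using 1
  have hrec := sum_kBesCoeff_succ n fun l => kBesTerm l x
  simp only [smul_eq_mul] at hrec
  rw [kBes_eq_sum, kBes_eq_sum, hrec, mul_sum, ← sum_add_distrib, ← sum_sub_distrib]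
  refine sum_congr rfl fun l _ => ?_
  rw [kBesTerm_succ]
  ring
end
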